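/- arXiv:2202.01971 — 2 statements merged into one kernel-verified Lean document; each statement's English description precedes it below -/
import Mathlib

section
/- End-to-end correctness of secure aggregation with quantization: let T be a finite set of clients, r ≥ 2, and suppose each client k has a quantized update u_k ∈ ℤ with u_k represented in ℤ/2^rℤ, and blinding factors r_k ∈ ℤ/2^rℤ generated from a symmetric function h with signs ε(k,n) as before. If the server computes Δ = Σ_{k ∈ T} (u_k + r_k) in ℤ/2^rℤ, then Δ = Σ_{k ∈ T} u_k in ℤ/2^rℤ; moreover, if additionally the integer sum s = Σ_{k ∈ T} u_k satisfies −2^{r−1} < s ≤ 2^{r−1} − 1, then s is uniquely determined by Δ via the signed-representative map. -/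
/-- End-to-end correctness of secure aggregation with quantization: the masked
sum in `ℤ/2^rℤ` equals the sum of the quantized updates, and if the true integer
sum `s` lies in the signed range `(-2^{r-1}, 2^{r-1}-1]` then `s` is the unique
such integer congruent to the recovered value `Δ`. -/
theorem secure_quantized_aggregation (r : ℕ) (hr : 2 ≤ r) (T : Finset ℕ)
    (u : ℕ → ℤ)
    (h : ℕ → ℕ → ZMod (2 ^ r)) (hsym : ∀ k n, k ≠ n → h k n = h n k)
    (rmask : ℕ → ZMod (2 ^ r))
    (hrm : ∀ k ∈ T, rmask k =
      ∑ n ∈ T.erase k, (if n < k then (-1 : ZMod (2 ^ r)) else 1) * h k n) :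
    (∑ k ∈ T, ((u k : ZMod (2 ^ r)) + rmask k) = ∑ k ∈ T, (u k : ZMod (2 ^ r))) ∧
      (-(2 : ℤ) ^ (r - 1) < ∑ k ∈ T, u k →
        (∑ k ∈ T, u k) ≤ (2 : ℤ) ^ (r - 1) - 1 →
        ∀ s' : ℤ, -(2 : ℤ) ^ (r - 1) < s' → s' ≤ (2 : ℤ) ^ (r - 1) - 1 →
          (s' : ZMod (2 ^ r)) = ∑ k ∈ T, ((u k : ZMod (2 ^ r)) + rmask k) →
          s' = ∑ k ∈ T, u k) := by
  have key : ∑ k ∈ T, ((u k : ZMod (2 ^ r)) + rmask k) = ∑ k ∈ T, (u k : ZMod (2 ^ r)) := by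
    rw [Finset.sum_add_distrib]
    have hz : ∑ k ∈ T, rmask k = 0 := by
      rw [Finset.sum_congr rfl hrm]
      have herase : ∀ k ∈ T,
          ∑ n ∈ T.erase k, (if n < k then (-1 : ZMod (2 ^ r)) else 1) * h k n
            = ∑ n ∈ T, if n ≠ k then (if n < k then (-1 : ZMod (2 ^ r)) else 1) * h k n else 0 := by
        intro k hk
        rw [← Finset.filter_ne', Finset.sum_filter]
      rw [Finset.sum_congr rfl herase, ← Finset.sum_product']
      set F : ℕ × ℕ → ZMod (2 ^ r) := fun p =>
        if p.2 ≠ p.1 then (if p.2 < p.1 then (-1 : ZMod (2 ^ r)) else 1) * h p.1 p.2 else 0 with hF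
      apply Finset.sum_involution (g := fun p _ => (p.2, p.1))
      · intro ⟨k, n⟩ _
        simp only [hF]
        by_cases hkn : n = k
        · simp [hkn]
        · simp only [hkn, Ne.symm hkn, if_true, ne_eq, not_false_iff]
          rw [hsym k n (Ne.symm hkn)]
          rcases lt_or_gt_of_ne (Ne.symm hkn : k ≠ n) with hlt | hlt
          · rw [if_neg (not_lt_of_gt hlt), if_pos hlt]; ring
          · rw [if_pos hlt, if_neg (not_lt_of_gt hlt)]; ring
      · intro ⟨k, n⟩ _ hne
        simp only [hF] at hne ⊢
        intro heq
        have : n = k := (Prod.mk.injEq _ _ _ _).mp heq |>.1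
        simp [this] at hne
      · intro ⟨k, n⟩ hp
        simp only [Finset.mem_product] at hp ⊢
        exact ⟨hp.2, hp.1⟩
      · intro p hp; rfl
    rw [hz, add_zero]
  refine ⟨key, fun hs1 hs2 s' hs1' hs2' heq => ?_⟩
  rw [key] at heq
  have hcast : ((s' - ∑ k ∈ T, u k : ℤ) : ZMod (2 ^ r)) = 0 := by
    push_cast
    rw [heq, sub_self]
  rw [ZMod.intCast_zmod_eq_zero_iff_dvd] at hcast
  have hdvd : ((2 : ℤ) ^ r) ∣ (s' - ∑ k ∈ T, u k) := by exact_mod_cast hcast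
  have h2r : (2 : ℤ) ^ r = 2 ^ (r - 1) + 2 ^ (r - 1) := by
    rw [← two_mul, ← pow_succ']
    congr 1
    omega
  have := Int.eq_zero_of_abs_lt_dvd hdvd (by rw [abs_lt]; constructor <;> [linarith [hs2, hs1', h2r]; linarith [hs1, hs2', h2r]])
  linarith [this]
end

section
/- Uniqueness of the aggregate under drop-out recovery: with T = T_o ⊔ T_d, the value s = Σ_{k ∈ T_o} w'_k − Σ_{k ∈ T_o} q_k (mod M) computed by the server depends only on the plaintext updates {w_k}_{k ∈ T_o} and not on the symmetric mask function h; i.e., for any two symmetric functions h, h' generating masks r_k, r'_k and recovery vectors q_k, q'_k, one has Σ_{k ∈ T_o}(w_k + r_k) − Σ_{k ∈ T_o} q_k ≡ Σ_{k ∈ T_o}(w_k + r'_k) − Σ_{k ∈ T_o} q'_k (mod M). -/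
lemma antisym_double_sum_zero (M : ℕ) (To : Finset ℕ) (h : ℕ → ℕ → ZMod M)
    (hsym : ∀ k n, k ≠ n → h k n = h n k) :
    ∑ k ∈ To, ∑ n ∈ To.erase k, (if n < k then (-1 : ZMod M) else 1) * h k n = 0 := by
  classical
  rw [← Finset.sum_sigma (To) (fun k => To.erase k)
    (fun p => (if p.2 < p.1 then (-1 : ZMod M) else 1) * h p.1 p.2)]
  apply Finset.sum_involution (fun p _ => (⟨p.2, p.1⟩ : Σ _ : ℕ, ℕ))
  · intro a ha
    simp only [Finset.mem_sigma, Finset.mem_erase] at ha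
    have hne : a.2 ≠ a.1 := ha.2.1
    rcases lt_or_gt_of_ne hne with hlt | hgt
    · simp only [hlt, if_pos, not_lt_of_gt hlt, if_neg]
      rw [hsym a.1 a.2 (Ne.symm hne)]
      simp
    · simp only [hgt, if_pos, not_lt_of_gt hgt, if_neg]
      rw [hsym a.1 a.2 (Ne.symm hne)]
      simp
  · intro a ha _
    simp only [Finset.mem_sigma, Finset.mem_erase] at ha
    intro heq
    exact ha.2.1 (congrArg Sigma.fst heq)
  · intro a ha
    simp only [Finset.mem_sigma, Finset.mem_erase] at ha ⊢
    exact ⟨ha.2.2, Ne.symm ha.2.1, ha.1⟩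
  · intro a _
    rfl

lemma recovered_eq (M : ℕ) (To Td : Finset ℕ) (hdisj : Disjoint To Td)
    (h : ℕ → ℕ → ZMod M) (hsym : ∀ k n, k ≠ n → h k n = h n k) (w : ℕ → ZMod M) :
    (∑ k ∈ To, (w k +
        ∑ n ∈ (To ∪ Td).erase k, (if n < k then (-1 : ZMod M) else 1) * h k n)) -
      (∑ k ∈ To, ∑ n ∈ Td, (if n < k then (-1 : ZMod M) else 1) * h k n)
    = ∑ k ∈ To, w k := by
  classical
  have split : ∀ k ∈ To,
      ∑ n ∈ (To ∪ Td).erase k, (if n < k then (-1 : ZMod M) else 1) * h k n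
      = (∑ n ∈ To.erase k, (if n < k then (-1 : ZMod M) else 1) * h k n)
        + ∑ n ∈ Td, (if n < k then (-1 : ZMod M) else 1) * h k n := by
    intro k hk
    have hkTd : k ∉ Td := Finset.disjoint_left.mp hdisj hk
    have : (To ∪ Td).erase k = To.erase k ∪ Td := by
      rw [Finset.erase_union_distrib, Finset.erase_eq_of_notMem hkTd]
    rw [this, Finset.sum_union]
    exact Finset.disjoint_of_subset_left (Finset.erase_subset _ _) hdisj
  rw [Finset.sum_congr rfl (fun k hk => by rw [split k hk])]
  simp only [Finset.sum_add_distrib]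
  rw [antisym_double_sum_zero M To h hsym]
  ring

/-- Uniqueness of the aggregate under drop-out recovery: the server's recovered
value `Σ_{k ∈ T_o} (w_k + r_k) − Σ_{k ∈ T_o} q_k (mod M)` does not depend on the
symmetric mask function used to generate the blinding factors. -/
theorem recovery_mask_independent (M : ℕ) (hM : 1 ≤ M) (To Td : Finset ℕ)
    (hdisj : Disjoint To Td)
    (h h' : ℕ → ℕ → ZMod M)
    (hsym : ∀ k n, k ≠ n → h k n = h n k)
    (hsym' : ∀ k n, k ≠ n → h' k n = h' n k)
    (w : ℕ → ZMod M) :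
    (∑ k ∈ To, (w k +
        ∑ n ∈ (To ∪ Td).erase k, (if n < k then (-1 : ZMod M) else 1) * h k n)) -
      (∑ k ∈ To, ∑ n ∈ Td, (if n < k then (-1 : ZMod M) else 1) * h k n)
    = (∑ k ∈ To, (w k +
        ∑ n ∈ (To ∪ Td).erase k, (if n < k then (-1 : ZMod M) else 1) * h' k n)) -
      (∑ k ∈ To, ∑ n ∈ Td, (if n < k then (-1 : ZMod M) else 1) * h' k n) := by
  rw [recovered_eq M To Td hdisj h hsym w, recovered_eq M To Td hdisj h' hsym' w]
end
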